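/- arXiv:2603.20054 — 2 statements merged into one kernel-verified Lean document; each statement's English description precedes it below -/
import Mathlib

section
/- Let ι = ι_{134567} be the automorphism of the lattice L sending C ↦ C + 3F - E_1 - E_3 - E_4 - E_5 - E_6 - E_7, F ↦ F, E_i ↦ F - E_i for i ∈ {1,3,4,5,6,7}, and E_2 ↦ E_2. Then for every class D = C + aF - Σ b_n E_n with a ≥ 0, b_n ∈ {0,1} and Σ b_n = 2a + 1, one has ι(D) ≠ D, and D + ι(D) ∈ {-K + E_2, -K + (F - E_2)} where K = -2C - 2F + Σ E_n. -/
/-- The geometric Picard lattice of a standard rational conic bundle of degree 1: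
the free abelian group with basis `C, F, E₁, …, E₇`, realized as `Fin 9 → ℤ`
(coordinate 0 for `C`, coordinate 1 for `F`, coordinates 2–8 for `E₁,…,E₇`). -/
abbrev Pic1 := Fin 9 → ℤ

/-- The index in `Fin 9` of the basis vector `E_n`. -/
def eIdx (n : Fin 7) : Fin 9 := ⟨n.1 + 2, by have := n.isLt; omega⟩

/-- The basis class `C`. -/
def Cv : Pic1 := fun i => if i = 0 then 1 else 0

/-- The basis class `F` (the class of a fiber). -/
def Fv : Pic1 := fun i => if i = 1 then 1 else 0

/-- The basis class `E_n`. -/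
def Ev (n : Fin 7) : Pic1 := fun i => if i = eIdx n then 1 else 0

/-- The intersection pairing: `C·C = F·F = 0`, `C·F = 1`, `E_i·E_i = -1`, and all
other products among basis vectors vanish. -/
def B (v w : Pic1) : ℤ :=
  v 0 * w 1 + v 1 * w 0 - ∑ n : Fin 7, v (eIdx n) * w (eIdx n)

/-- The canonical class `K = -2C - 2F + E₁ + ⋯ + E₇`. -/
def Kv : Pic1 := fun i => -2 * Cv i - 2 * Fv i + ∑ n : Fin 7, Ev n i

/-- The linear map `ι_S` determined on the basis by
`C ↦ C + (|S|/2)F - Σ_{n ∈ S} Eₙ`, `F ↦ F`, `Eₙ ↦ F - Eₙ` for `n ∈ S` and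
`Eₙ ↦ Eₙ` otherwise, written out in coordinates. -/
def iotaS (S : Finset (Fin 7)) (v : Pic1) : Pic1 := fun i =>
  if i.1 = 0 then v 0
  else if i.1 = 1 then ((S.card : ℤ) / 2) * v 0 + v 1 + ∑ n ∈ S, v (eIdx n)
  else if (⟨i.1 - 2, by have := i.isLt; omega⟩ : Fin 7) ∈ S then -(v 0) - v i
  else v i

/-- The automorphism `ι_{134567}`, sending `C ↦ C + 3F - E₁ - E₃ - E₄ - E₅ - E₆ - E₇`,
`F ↦ F`, `Eᵢ ↦ F - Eᵢ` for `i ∈ {1,3,4,5,6,7}` and `E₂ ↦ E₂`. -/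
def iota134567 : Pic1 → Pic1 := iotaS ({0, 2, 3, 4, 5, 6} : Finset (Fin 7))

/-! On an `Eₙ`-coordinate with `n ∈ S`, `ι_S` acts by `x ↦ -x - c`, where `c` is the `C`-coefficient;
for odd `c` this has no fixed point, so `ι_S` moves every class with odd `C`-coefficient.
The sum `D + ι(D)` is computed coordinatewise: its `F`-coefficient is `2 + b₂` because
`Σ bₙ = 2a + 1`, and its `E₂`-coefficient is `-2b₂`, so the two cases are `b₂ = 0` and `b₂ = 1`
(`b₂` is `b 1` here, as `E₂` is `Ev 1`). -/

lemma eIdx_injective : Function.Injective eIdx := by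
  intro m n h
  simpa [eIdx, Fin.ext_iff] using h

lemma Pic1.ext_coord {v w : Pic1} (h0 : v 0 = w 0) (h1 : v 1 = w 1)
    (hE : ∀ n, v (eIdx n) = w (eIdx n)) : v = w := by
  funext i
  fin_cases i
  exacts [h0, h1, hE 0, hE 1, hE 2, hE 3, hE 4, hE 5, hE 6]

section Coordinates

variable (m n : Fin 7)

@[simp] lemma Cv_zero : Cv 0 = 1 := rfl
@[simp] lemma Cv_one : Cv 1 = 0 := rfl
@[simp] lemma Cv_eIdx : Cv (eIdx n) = 0 := rfl
@[simp] lemma Fv_zero : Fv 0 = 0 := rfl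
@[simp] lemma Fv_one : Fv 1 = 1 := rfl
@[simp] lemma Fv_eIdx : Fv (eIdx n) = 0 := rfl
@[simp] lemma Ev_zero : Ev m 0 = 0 := rfl
@[simp] lemma Ev_one : Ev m 1 = 0 := rfl

@[simp] lemma Ev_eIdx : Ev m (eIdx n) = if m = n then 1 else 0 := by
  simp [Ev, eIdx_injective.eq_iff, eq_comm]

@[simp] lemma Kv_zero : Kv 0 = -2 := by simp [Kv]
@[simp] lemma Kv_one : Kv 1 = -2 := by simp [Kv]
@[simp] lemma Kv_eIdx : Kv (eIdx n) = 1 := by simp [Kv]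

end Coordinates

section Iota

variable (S : Finset (Fin 7)) (v : Pic1)

@[simp] lemma iotaS_zero : iotaS S v 0 = v 0 := rfl

@[simp] lemma iotaS_one :
    iotaS S v 1 = ((S.card : ℤ) / 2) * v 0 + v 1 + ∑ n ∈ S, v (eIdx n) := rfl

lemma iotaS_eIdx (n : Fin 7) :
    iotaS S v (eIdx n) = if n ∈ S then -v 0 - v (eIdx n) else v (eIdx n) := by
  simp [iotaS, eIdx]

lemma iotaS_ne_self {S : Finset (Fin 7)} (hS : S.Nonempty) {v : Pic1} (hv : Odd (v 0)) :
    iotaS S v ≠ v := by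
  obtain ⟨n, hn⟩ := hS
  intro h
  have hcoord := congrFun h (eIdx n)
  rw [iotaS_eIdx, if_pos hn] at hcoord
  exact Int.not_even_iff_odd.mpr hv ⟨-v (eIdx n), by omega⟩

end Iota

lemma iota134567_eq_iotaS_erase : iota134567 = iotaS (Finset.univ.erase 1) := by
  rw [iota134567]
  congr 1

def sectionClass (a : ℤ) (b : Fin 7 → ℤ) : Pic1 :=
  fun i => Cv i + a * Fv i - ∑ n : Fin 7, b n * Ev n i

section SectionClass

variable (a : ℤ) (b : Fin 7 → ℤ)

@[simp] lemma sectionClass_zero : sectionClass a b 0 = 1 := by simp [sectionClass]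
@[simp] lemma sectionClass_one : sectionClass a b 1 = a := by simp [sectionClass]
@[simp] lemma sectionClass_eIdx (n : Fin 7) : sectionClass a b (eIdx n) = -b n := by
  simp [sectionClass]

end SectionClass

lemma sectionClass_add_iota134567 {a : ℤ} {b : Fin 7 → ℤ}
    (hsum : ∑ n : Fin 7, b n = 2 * a + 1) :
    sectionClass a b + iota134567 (sectionClass a b) = -Kv + Ev 1 + b 1 • (Fv - 2 • Ev 1) := by
  have hsumS : ∑ n ∈ Finset.univ.erase 1, b n = 2 * a + 1 - b 1 := by
    rw [Finset.sum_erase_eq_sub (Finset.mem_univ 1), hsum]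
  rw [iota134567_eq_iotaS_erase]
  refine Pic1.ext_coord ?_ ?_ fun n => ?_
  · simp
  · simp [Finset.sum_neg_distrib, hsumS]
    ring
  · by_cases hn : n = 1
    · subst hn; simp [iotaS_eIdx]; ring
    · simp [iotaS_eIdx, hn, Ne.symm hn]

theorem iota134567_moves_neg_one_sections_general (a : ℤ) (b : Fin 7 → ℤ)
    (hb : ∀ n, b n = 0 ∨ b n = 1)
    (hsum : ∑ n : Fin 7, b n = 2 * a + 1) :
    iota134567 (fun i => Cv i + a * Fv i - ∑ n : Fin 7, b n * Ev n i) ≠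
        (fun i => Cv i + a * Fv i - ∑ n : Fin 7, b n * Ev n i) ∧
    ((fun i => Cv i + a * Fv i - ∑ n : Fin 7, b n * Ev n i) +
        iota134567 (fun i => Cv i + a * Fv i - ∑ n : Fin 7, b n * Ev n i) =
          -Kv + Ev 1 ∨
     (fun i => Cv i + a * Fv i - ∑ n : Fin 7, b n * Ev n i) +
        iota134567 (fun i => Cv i + a * Fv i - ∑ n : Fin 7, b n * Ev n i) =
          -Kv + (Fv - Ev 1)) := by
  change iota134567 (sectionClass a b) ≠ sectionClass a b ∧
    (sectionClass a b + iota134567 (sectionClass a b) = -Kv + Ev 1 ∨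
      sectionClass a b + iota134567 (sectionClass a b) = -Kv + (Fv - Ev 1))
  refine ⟨iotaS_ne_self (by decide) (by simp), ?_⟩
  rw [sectionClass_add_iota134567 hsum]
  rcases hb 1 with h | h
  · left; simp [h]
  · right; rw [h, one_smul]; abel

/-- For every `(-1)`-section class `D = C + aF - Σ bₙEₙ` (with `a ≥ 0`, `bₙ ∈ {0,1}`,
`Σ bₙ = 2a + 1`), one has `ι_{134567}(D) ≠ D` and
`D + ι_{134567}(D) ∈ {-K + E₂, -K + (F - E₂)}`. -/
theorem iota134567_moves_neg_one_sections (a : ℤ) (b : Fin 7 → ℤ)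
    (ha : 0 ≤ a) (hb : ∀ n, b n = 0 ∨ b n = 1)
    (hsum : ∑ n : Fin 7, b n = 2 * a + 1) :
    iota134567 (fun i => Cv i + a * Fv i - ∑ n : Fin 7, b n * Ev n i) ≠
        (fun i => Cv i + a * Fv i - ∑ n : Fin 7, b n * Ev n i) ∧
    ((fun i => Cv i + a * Fv i - ∑ n : Fin 7, b n * Ev n i) +
        iota134567 (fun i => Cv i + a * Fv i - ∑ n : Fin 7, b n * Ev n i) =
          -Kv + Ev 1 ∨
     (fun i => Cv i + a * Fv i - ∑ n : Fin 7, b n * Ev n i) +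
        iota134567 (fun i => Cv i + a * Fv i - ∑ n : Fin 7, b n * Ev n i) =
          -Kv + (Fv - Ev 1)) :=
  iota134567_moves_neg_one_sections_general a b hb hsum
end

section
/- For every involution ι_{jk} of the lattice L (j ≠ k in {1,...,7}) sending C ↦ C + F - E_j - E_k, F ↦ F, E_j ↦ F - E_j, E_k ↦ F - E_k and fixing the other E_i, and for every class D = C + aF - Σ b_n E_n with a ≥ 0, b_n ∈ {0,1}, Σ b_n = 2a + 1, one has ι_{jk}(D) ≠ D and D·ι_{jk}(D) = 0. -/
lemma eIdx_ne_zero (m : Fin 7) : eIdx m ≠ 0 := fun h => by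
  simpa [eIdx] using congrArg Fin.val h

lemma eIdx_ne_one (m : Fin 7) : eIdx m ≠ 1 := fun h => by
  simpa [eIdx] using congrArg Fin.val h

@[simp]
lemma sectionClass_apply_zero (a : ℤ) (b : Fin 7 → ℤ) : sectionClass a b 0 = 1 := by
  simp [sectionClass, Cv, Fv, Ev, (eIdx_ne_zero _).symm]

@[simp]
lemma sectionClass_apply_one (a : ℤ) (b : Fin 7 → ℤ) : sectionClass a b 1 = a := by
  simp [sectionClass, Cv, Fv, Ev, (eIdx_ne_one _).symm]

@[simp]
lemma sectionClass_apply_eIdx (a : ℤ) (b : Fin 7 → ℤ) (m : Fin 7) :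
    sectionClass a b (eIdx m) = -b m := by
  simp [sectionClass, Cv, Fv, Ev, eIdx_ne_zero, eIdx_ne_one, eIdx_injective.eq_iff]

lemma B_self (v : Pic1) : B v v = 2 * v 0 * v 1 - ∑ n : Fin 7, v (eIdx n) ^ 2 := by
  simp only [B, sq]; ring

lemma B_sectionClass_self (a : ℤ) (b : Fin 7 → ℤ) :
    B (sectionClass a b) (sectionClass a b) = 2 * a - ∑ n : Fin 7, b n ^ 2 := by
  simp [B_self]

lemma iotaS_apply_zero (S : Finset (Fin 7)) (v : Pic1) : iotaS S v 0 = v 0 := by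
  simp [iotaS]

lemma iotaS_apply_one (S : Finset (Fin 7)) (v : Pic1) :
    iotaS S v 1 = ((S.card : ℤ) / 2) * v 0 + v 1 + ∑ n ∈ S, v (eIdx n) := by
  simp [iotaS]

lemma iotaS_apply_eIdx (S : Finset (Fin 7)) (v : Pic1) (m : Fin 7) :
    iotaS S v (eIdx m) = if m ∈ S then -v 0 - v (eIdx m) else v (eIdx m) := by
  simp [iotaS, eIdx]

lemma iotaS_ne_self_of_odd {S : Finset (Fin 7)} {j : Fin 7} (hj : j ∈ S) {v : Pic1}
    (hv : Odd (v 0)) : iotaS S v ≠ v := by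
  intro h
  have hjv := congrFun h (eIdx j)
  rw [iotaS_apply_eIdx, if_pos hj] at hjv
  obtain ⟨c, hc⟩ := hv
  omega

lemma B_iotaS_self (S : Finset (Fin 7)) (v : Pic1) :
    B v (iotaS S v) = B v v + ((S.card : ℤ) / 2) * v 0 ^ 2
      + 2 * ∑ n ∈ S, v (eIdx n) * (v (eIdx n) + v 0) := by
  have hterm : ∀ n : Fin 7, v (eIdx n) * iotaS S v (eIdx n) =
      v (eIdx n) * v (eIdx n) - if n ∈ S then v (eIdx n) * (2 * v (eIdx n) + v 0) else 0 := by
    intro n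
    rw [iotaS_apply_eIdx]
    split_ifs <;> ring
  have hcross : 2 * ∑ n ∈ S, v (eIdx n) * (v (eIdx n) + v 0) =
      ∑ n ∈ S, v (eIdx n) * (2 * v (eIdx n) + v 0) + v 0 * ∑ n ∈ S, v (eIdx n) := by
    rw [Finset.mul_sum, Finset.mul_sum, ← Finset.sum_add_distrib]
    exact Finset.sum_congr rfl fun _ _ => by ring
  simp only [B, iotaS_apply_zero, iotaS_apply_one, hterm, Finset.sum_sub_distrib,
    Finset.sum_ite_mem, Finset.univ_inter, hcross]
  ring

theorem iota_jk_moves_neg_one_sections_general (j k : Fin 7) (hjk : j ≠ k)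
    (a : ℤ) (b : Fin 7 → ℤ) (hb : ∀ n, b n = 0 ∨ b n = 1)
    (hsum : ∑ n : Fin 7, b n = 2 * a + 1) :
    iotaS ({j, k} : Finset (Fin 7)) (fun i => Cv i + a * Fv i - ∑ n : Fin 7, b n * Ev n i) ≠
        (fun i => Cv i + a * Fv i - ∑ n : Fin 7, b n * Ev n i) ∧
    B (fun i => Cv i + a * Fv i - ∑ n : Fin 7, b n * Ev n i)
        (iotaS ({j, k} : Finset (Fin 7))
          (fun i => Cv i + a * Fv i - ∑ n : Fin 7, b n * Ev n i)) = 0 := by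
  have hsq : ∀ n, b n ^ 2 = b n := fun n => by rcases hb n with h | h <;> simp [h]
  have hidem : ∀ n, b n * (b n - 1) = 0 := fun n => by rcases hb n with h | h <;> simp [h]
  refine ⟨iotaS_ne_self_of_odd (Finset.mem_insert_self j {k}) (v := sectionClass a b)
    (by simp), ?_⟩
  show B (sectionClass a b) (iotaS {j, k} (sectionClass a b)) = 0
  rw [B_iotaS_self, B_sectionClass_self, Finset.card_pair hjk, Finset.sum_pair hjk]
  simp only [hsq, hsum, sectionClass_apply_eIdx, sectionClass_apply_zero, Nat.cast_ofNat,
    Int.reduceDiv]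
  linear_combination 2 * (hidem j + hidem k)

/-- For every involution `ι_{jk}` (`j ≠ k`), sending `C ↦ C + F - Eⱼ - Eₖ`, `F ↦ F`,
`Eⱼ ↦ F - Eⱼ`, `Eₖ ↦ F - Eₖ` and fixing the other `Eᵢ`, and for every class
`D = C + aF - Σ bₙEₙ` with `a ≥ 0`, `bₙ ∈ {0,1}`, `Σ bₙ = 2a + 1`, one has
`ι_{jk}(D) ≠ D` and `D·ι_{jk}(D) = 0`. -/
theorem iota_jk_moves_neg_one_sections (j k : Fin 7) (hjk : j ≠ k)
    (a : ℤ) (b : Fin 7 → ℤ) (ha : 0 ≤ a) (hb : ∀ n, b n = 0 ∨ b n = 1)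
    (hsum : ∑ n : Fin 7, b n = 2 * a + 1) :
    iotaS ({j, k} : Finset (Fin 7)) (fun i => Cv i + a * Fv i - ∑ n : Fin 7, b n * Ev n i) ≠
        (fun i => Cv i + a * Fv i - ∑ n : Fin 7, b n * Ev n i) ∧
    B (fun i => Cv i + a * Fv i - ∑ n : Fin 7, b n * Ev n i)
        (iotaS ({j, k} : Finset (Fin 7))
          (fun i => Cv i + a * Fv i - ∑ n : Fin 7, b n * Ev n i)) = 0 :=
  iota_jk_moves_neg_one_sections_general j k hjk a b hb hsum
end
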